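/- With $w_\varepsilon$ as above ($w_\varepsilon(x)=1-|x|$ for $\varepsilon<|x|\le1$ and $1-\frac\varepsilon2-\frac{|x|^2}{2\varepsilon}$ for $|x|\le\varepsilon$), the coarea-type quantity $\int_0^{\sup w_\varepsilon}\|\Delta_\infty^N w_\varepsilon\|_{L^\infty(\{w_\varepsilon=r\})}\,dr$ equals $\frac{1}{\varepsilon}\cdot\frac{\varepsilon}{2}=\frac12$ plus $0$ from the cone part, hence is bounded by $1$ uniformly in $\varepsilon$, whereas $\|\Delta_\infty^N w_\varepsilon\|_{L^\infty(B_1(0))}=\frac1\varepsilon\to\infty$. -/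

import Mathlib

/-!
Inside the `ε`-ball `∇w_ε(x) = -x/ε`, so `Δ_∞^N w_ε = -1/ε` there except at the origin, where
`∇w_ε = 0`. Outside it `|∇w_ε| ≡ 1`, so `D(∇w_ε) ∇w_ε ⟂ ∇w_ε` and `Δ_∞^N w_ε = 0`; on the sphere
`|x| = ε` the gradient has a kink along rays, hence is not differentiable. Thus
`|Δ_∞^N w_ε(x)| = ε⁻¹ · 1_{(1-ε, 1-ε/2)}(w_ε(x))` is a function of `w_ε(x)`, so its supremum over
the level set `{w_ε = r} ∩ B₁` is `ε⁻¹ · 1_{(1-ε, 1-ε/2)}(r)` (each such level is attained), whose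
integral is `1/2`, while its supremum over `B₁` is `ε⁻¹`.
-/

open RealInnerProductSpace MeasureTheory Set Filter Topology

section Calculus

variable {E : Type*} [NormedAddCommGroup E] [InnerProductSpace ℝ E] [CompleteSpace E]

theorem hasGradientAt_norm_sq (y : E) : HasGradientAt (fun z => ‖z‖ ^ 2) ((2 : ℝ) • y) y := by
  rw [hasGradientAt_iff_hasFDerivAt]
  refine (hasStrictFDerivAt_norm_sq y).hasFDerivAt.congr_fderiv ?_
  ext v
  simp [InnerProductSpace.toDual_apply_apply]

theorem hasGradientAt_norm {y : E} (hy : y ≠ 0) : HasGradientAt (‖·‖) (‖y‖⁻¹ • y) y := by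
  have h := (hasGradientAt_norm_sq y).hasFDerivAt.sqrt (by positivity)
  simp only [Real.sqrt_sq (norm_nonneg _)] at h
  rw [hasGradientAt_iff_hasFDerivAt]
  refine h.congr_fderiv ?_
  ext v
  simp only [map_smul, smul_apply, InnerProductSpace.toDual_apply_apply, smul_eq_mul]
  field_simp

end Calculus

theorem inner_fderiv_apply_self_eq_zero {E F : Type*} [NormedAddCommGroup E] [NormedSpace ℝ E]
    [NormedAddCommGroup F] [InnerProductSpace ℝ F] {φ : E → F} {x : E} {c : ℝ}
    (hφ : DifferentiableAt ℝ φ x) (hc : ∀ᶠ y in 𝓝 x, ‖φ y‖ = c) (v : E) :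
    ⟪fderiv ℝ φ x v, φ x⟫ = 0 := by
  have hsq : (‖φ ·‖ ^ 2) =ᶠ[𝓝 x] fun _ => c ^ 2 := hc.mono fun _ hy => congrArg (· ^ 2) hy
  have h := hφ.hasFDerivAt.norm_sq.unique ((hasFDerivAt_const (c ^ 2) x).congr_of_eventuallyEq hsq)
  have hv := congrArg (· v) h
  simp only [smul_apply, ContinuousLinearMap.comp_apply, innerSL_apply_apply,
    zero_apply, smul_eq_zero, two_ne_zero, false_or] at hv
  rwa [real_inner_comm]

theorem not_differentiableAt_of_kink {F : Type*} [NormedAddCommGroup F] [NormedSpace ℝ F]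
    {f : ℝ → F} {a b : F} (hb : b ≠ 0) (hright : ∀ᶠ t in 𝓝[>] 0, f t = a)
    (hleft : ∀ᶠ t in 𝓝[<] 0, f t = a + t • b) : ¬DifferentiableAt ℝ f 0 := by
  intro hf
  have hf0 : f 0 = a := tendsto_nhds_unique (hf.continuousAt.tendsto.mono_left nhdsWithin_le_nhds)
    (tendsto_const_nhds.congr' (hright.mono fun _ ht => ht.symm))
  have hderiv_right : HasDerivWithinAt f 0 (Ioi 0) 0 :=
    (hasDerivWithinAt_const 0 _ a).congr_of_eventuallyEq hright hf0
  have hderiv_left : HasDerivWithinAt f b (Iio 0) 0 := by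
    have hline : HasDerivAt (fun t : ℝ => a + t • b) b 0 := by
      simpa using ((hasDerivAt_id (0 : ℝ)).smul_const b).const_add a
    exact hline.hasDerivWithinAt.congr_of_eventuallyEq hleft (by simp [hf0])
  have h0 := (uniqueDiffWithinAt_Ioi 0).eq_deriv _ hderiv_right hf.hasDerivAt.hasDerivWithinAt
  have hb' := (uniqueDiffWithinAt_Iio 0).eq_deriv _ hderiv_left hf.hasDerivAt.hasDerivWithinAt
  exact hb (hb'.trans h0.symm)

theorem sSup_image_comp_fiber {α : Type*} {S : Set α} {w : α → ℝ} {g : ℝ → ℝ} {r : ℝ}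
    (hg : g r ≠ 0 → ∃ x ∈ S, w x = r) :
    sSup ((fun x => g (w x)) '' {x | x ∈ S ∧ w x = r}) = g r := by
  rcases eq_empty_or_nonempty {x | x ∈ S ∧ w x = r} with hempty | hne
  · rw [hempty, image_empty, Real.sSup_empty]
    by_contra hr
    obtain ⟨x, hxS, hxr⟩ := hg (Ne.symm hr)
    exact hempty.subset ⟨hxS, hxr⟩
  · have himage : (fun x => g (w x)) '' {x | x ∈ S ∧ w x = r} = {g r} :=
      hne.image_const _ |>.symm ▸ image_congr fun x hx => by rw [hx.2]
    rw [himage, csSup_singleton]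

theorem intervalIntegral_indicator_Ioo_const {a b c k : ℝ} (hab : a ≤ b) (hbc : b ≤ c) :
    ∫ r in a..c, (Ioo b c).indicator (fun _ => k) r = (c - b) * k := by
  rw [intervalIntegral.integral_of_le (hab.trans hbc), integral_indicator_const _ measurableSet_Ioo,
    measureReal_restrict_apply measurableSet_Ioo,
    inter_eq_left.mpr (Ioo_subset_Ioc_self.trans (Ioc_subset_Ioc_left hab)),
    Real.volume_real_Ioo_of_le hbc, smul_eq_mul]

section Laplacian

variable {E : Type*} [NormedAddCommGroup E] [InnerProductSpace ℝ E] [CompleteSpace E]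
  {u : E → ℝ} {x : E}

/-- The normalized infinity Laplacian `⟪D²u ν, ν⟫` with `ν = ∇u / |∇u|`. At critical points
`ν = 0`, and where `∇u` is not differentiable `fderiv` is `0`; the value is `0` in both cases. -/
noncomputable def normalizedInftyLaplacian (u : E → ℝ) (x : E) : ℝ :=
  ⟪fderiv ℝ (gradient u) x (‖gradient u x‖⁻¹ • gradient u x), ‖gradient u x‖⁻¹ • gradient u x⟫

theorem normalizedInftyLaplacian_of_gradient_eq_zero (h : gradient u x = 0) :
    normalizedInftyLaplacian u x = 0 := by
  simp [normalizedInftyLaplacian, h]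

theorem normalizedInftyLaplacian_of_not_differentiableAt
    (h : ¬DifferentiableAt ℝ (gradient u) x) : normalizedInftyLaplacian u x = 0 := by
  simp [normalizedInftyLaplacian, fderiv_zero_of_not_differentiableAt h]

theorem normalizedInftyLaplacian_of_gradient_eventuallyEq_smul {c : ℝ}
    (h : gradient u =ᶠ[𝓝 x] fun y => c • y) (hx : c • x ≠ 0) :
    normalizedInftyLaplacian u x = c := by
  have hfderiv : fderiv ℝ (gradient u) x = c • ContinuousLinearMap.id ℝ E := by
    rw [h.fderiv_eq]
    exact (c • ContinuousLinearMap.id ℝ E).hasFDerivAt.fderiv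
  have hunit : ‖‖c • x‖⁻¹ • (c • x)‖ = 1 := by
    rw [norm_smul, norm_inv, norm_norm, inv_mul_cancel₀ (norm_ne_zero_iff.mpr hx)]
  rw [normalizedInftyLaplacian, hfderiv, h.self_of_nhds]
  simp only [smul_apply, ContinuousLinearMap.id_apply, real_inner_smul_left,
    real_inner_self_eq_norm_sq, hunit]
  ring

theorem normalizedInftyLaplacian_of_norm_gradient_eventually_const {c : ℝ}
    (hd : DifferentiableAt ℝ (gradient u) x) (hc : ∀ᶠ y in 𝓝 x, ‖gradient u y‖ = c) :
    normalizedInftyLaplacian u x = 0 := by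
  simp only [normalizedInftyLaplacian, map_smul, real_inner_smul_left, real_inner_smul_right,
    inner_fderiv_apply_self_eq_zero hd hc, mul_zero]

end Laplacian

section RoundedCone

variable {E : Type*} [NormedAddCommGroup E] {ε : ℝ}

/-- The paper's `w_ε`: the cone `1 - |x|` with its tip replaced, on the `ε`-ball, by the tangent
paraboloid. -/
noncomputable def roundedCone (ε : ℝ) (x : E) : ℝ :=
  if ‖x‖ ≤ ε then 1 - ε / 2 - ‖x‖ ^ 2 / (2 * ε) else 1 - ‖x‖

theorem roundedCone_mem_Ioo_iff (hε : 0 < ε) (x : E) :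
    roundedCone ε x ∈ Ioo (1 - ε) (1 - ε / 2) ↔ 0 < ‖x‖ ∧ ‖x‖ < ε := by
  unfold roundedCone
  split_ifs with hx
  · have hq : ‖x‖ ^ 2 / (2 * ε) * (2 * ε) = ‖x‖ ^ 2 := div_mul_cancel₀ _ (by positivity)
    constructor
    · rintro ⟨h1, h2⟩
      constructor <;> nlinarith [norm_nonneg x]
    · rintro ⟨h1, h2⟩
      constructor <;> nlinarith
  · simp only [mem_Ioo, not_le.mp hx |>.not_gt, and_false, iff_false, not_and]
    intro h; linarith

theorem exists_roundedCone_eq [NormedSpace ℝ E] [Nontrivial E] (hε : 0 < ε) {r : ℝ}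
    (hr : r ∈ Icc (1 - ε) (1 - ε / 2)) : ∃ x : E, ‖x‖ ≤ ε ∧ roundedCone ε x = r := by
  obtain ⟨x, hx⟩ := exists_norm_eq E (Real.sqrt_nonneg (2 * ε * (1 - ε / 2 - r)))
  have hsq : ‖x‖ ^ 2 = 2 * ε * (1 - ε / 2 - r) := by
    rw [hx, Real.sq_sqrt (by nlinarith [hr.2])]
  have hxε : ‖x‖ ≤ ε := by nlinarith [hr.1, norm_nonneg x]
  refine ⟨x, hxε, ?_⟩
  rw [roundedCone, if_pos hxε, hsq]
  field_simp
  ring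

end RoundedCone

section RoundedConeGradient

variable {E : Type*} [NormedAddCommGroup E] [InnerProductSpace ℝ E] [CompleteSpace E] {ε : ℝ}

theorem gradient_roundedCone_eventuallyEq_of_norm_lt {y : E} (hy : ‖y‖ < ε) :
    gradient (roundedCone ε) =ᶠ[𝓝 y] fun z => -ε⁻¹ • z := by
  have hε : ε ≠ 0 := ((norm_nonneg y).trans_lt hy).ne'
  filter_upwards [(isOpen_lt continuous_norm continuous_const).mem_nhds hy] with z hz
  have hparab : HasGradientAt (fun z : E => 1 - ε / 2 - ‖z‖ ^ 2 / (2 * ε)) (-ε⁻¹ • z) z := by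
    rw [hasGradientAt_iff_hasFDerivAt]
    simp only [div_eq_mul_inv]
    refine (((hasGradientAt_norm_sq z).hasFDerivAt.mul_const (2 * ε)⁻¹).const_sub _).congr_fderiv ?_
    ext v
    simp only [map_smul, neg_apply, smul_apply, InnerProductSpace.toDual_apply_apply, smul_eq_mul,
      neg_smul, map_neg]
    field_simp
  refine (hparab.congr_of_eventuallyEq ?_).gradient
  filter_upwards [(isOpen_lt continuous_norm continuous_const).mem_nhds hz] with w hw
  exact if_pos hw.le

theorem gradient_roundedCone_eventuallyEq_of_lt_norm (hε : 0 ≤ ε) {y : E} (hy : ε < ‖y‖) :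
    gradient (roundedCone ε) =ᶠ[𝓝 y] fun z => -‖z‖⁻¹ • z := by
  filter_upwards [(isOpen_lt continuous_const continuous_norm).mem_nhds hy] with z hz
  have hcone : HasGradientAt (fun z : E => 1 - ‖z‖) (-‖z‖⁻¹ • z) z := by
    rw [hasGradientAt_iff_hasFDerivAt]
    have hz0 : z ≠ 0 := norm_pos_iff.mp (hε.trans_lt hz)
    refine ((hasGradientAt_norm hz0).hasFDerivAt.const_sub 1).congr_fderiv ?_
    ext v
    simp [InnerProductSpace.toDual_apply_apply]
  refine (hcone.congr_of_eventuallyEq ?_).gradient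
  filter_upwards [(isOpen_lt continuous_const continuous_norm).mem_nhds hz] with w hw
  exact if_neg hw.not_ge

theorem not_differentiableAt_gradient_roundedCone (hε : 0 < ε) {x : E} (hx : ‖x‖ = ε) :
    ¬DifferentiableAt ℝ (gradient (roundedCone ε)) x := by
  have hray (t : ℝ) : x + t • x = (1 + t) • x := by rw [add_smul, one_smul]
  have hnorm {t : ℝ} (ht : -1 < t) : ‖x + t • x‖ = (1 + t) * ε := by
    rw [hray, norm_smul, Real.norm_eq_abs, abs_of_pos (by linarith), hx]
  intro hd
  refine not_differentiableAt_of_kink (f := fun t : ℝ => gradient (roundedCone ε) (x + t • x))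
    (a := -ε⁻¹ • x) (b := -ε⁻¹ • x) ?_ ?_ ?_ ?_
  · have hx0 : x ≠ 0 := norm_pos_iff.mp (hx ▸ hε)
    simp [hε.ne', hx0]
  · filter_upwards [self_mem_nhdsWithin] with t (ht : 0 < t)
    have hout : ε < ‖x + t • x‖ := by rw [hnorm (by linarith)]; nlinarith
    rw [(gradient_roundedCone_eventuallyEq_of_lt_norm hε.le hout).self_of_nhds]
    dsimp only
    rw [hnorm (by linarith), hray, smul_smul]
    congr 1
    field_simp
  · filter_upwards [self_mem_nhdsWithin,
      mem_nhdsWithin_of_mem_nhds (Ioi_mem_nhds (by norm_num : (-1 : ℝ) < 0))]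
      with t (ht : t < 0) (ht' : -1 < t)
    have hin : ‖x + t • x‖ < ε := by rw [hnorm ht']; nlinarith
    rw [(gradient_roundedCone_eventuallyEq_of_norm_lt hin).self_of_nhds]
    exact (smul_add _ _ _).trans (congrArg _ (smul_comm _ _ _))
  · exact DifferentiableAt.comp (g := gradient (roundedCone ε)) 0 (by simpa using hd)
      (by fun_prop)

theorem normalizedInftyLaplacian_roundedCone (hε : 0 < ε) (x : E) :
    normalizedInftyLaplacian (roundedCone ε) x = if 0 < ‖x‖ ∧ ‖x‖ < ε then -ε⁻¹ else 0 := by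
  rcases lt_trichotomy ‖x‖ ε with hin | hsphere | hout
  · have hgrad := gradient_roundedCone_eventuallyEq_of_norm_lt hin
    rcases (norm_nonneg x).eq_or_lt with hx0 | hx0
    · rw [if_neg (by simp [← hx0])]
      exact normalizedInftyLaplacian_of_gradient_eq_zero <|
        hgrad.self_of_nhds.trans (by simp [norm_eq_zero.mp hx0.symm])
    · rw [if_pos ⟨hx0, hin⟩]
      exact normalizedInftyLaplacian_of_gradient_eventuallyEq_smul hgrad
        (smul_ne_zero (by simp [hε.ne']) (norm_pos_iff.mp hx0))
  · rw [if_neg (by simp [hsphere])]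
    exact normalizedInftyLaplacian_of_not_differentiableAt
      (not_differentiableAt_gradient_roundedCone hε hsphere)
  · rw [if_neg (by simp [hout.le.not_gt])]
    have hgrad := gradient_roundedCone_eventuallyEq_of_lt_norm hε.le hout
    have hx0 : x ≠ 0 := norm_pos_iff.mp (hε.trans hout)
    refine normalizedInftyLaplacian_of_norm_gradient_eventually_const (c := 1) ?_ ?_
    · refine DifferentiableAt.congr_of_eventuallyEq ?_ hgrad
      exact ((differentiableAt_id.norm ℝ hx0).inv (norm_ne_zero_iff.mpr hx0)).neg.smul
        differentiableAt_id
    · filter_upwards [hgrad, (isOpen_lt continuous_const continuous_norm).mem_nhds hout]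
        with y hy (hy' : ε < ‖y‖)
      rw [hy, norm_smul, norm_neg, norm_inv, norm_norm,
        inv_mul_cancel₀ (hε.trans hy').ne']

theorem abs_normalizedInftyLaplacian_roundedCone (hε : 0 < ε) (x : E) :
    |normalizedInftyLaplacian (roundedCone ε) x| =
      (Ioo (1 - ε) (1 - ε / 2)).indicator (fun _ => ε⁻¹) (roundedCone ε x) := by
  simp only [normalizedInftyLaplacian_roundedCone hε, indicator_apply, roundedCone_mem_Ioo_iff hε]
  split_ifs <;> simp [hε.le]

end RoundedConeGradient

section LevelSets

variable {E : Type*} [NormedAddCommGroup E] [InnerProductSpace ℝ E] [CompleteSpace E]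
  [Nontrivial E] {ε : ℝ}

theorem sSup_abs_normalizedInftyLaplacian_roundedCone_levelSet (hε : ε ∈ Ioo 0 1) (r : ℝ) :
    sSup ((fun x => |normalizedInftyLaplacian (roundedCone ε) x|) ''
        {x | x ∈ Metric.ball (0 : E) 1 ∧ roundedCone ε x = r}) =
      (Ioo (1 - ε) (1 - ε / 2)).indicator (fun _ => ε⁻¹) r := by
  simp only [abs_normalizedInftyLaplacian_roundedCone hε.1]
  refine sSup_image_comp_fiber fun hr => ?_
  obtain ⟨x, hxε, hx⟩ := exists_roundedCone_eq (E := E) hε.1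
    (Ioo_subset_Icc_self (mem_of_indicator_ne_zero hr))
  exact ⟨x, mem_ball_zero_iff.mpr (hxε.trans_lt hε.2), hx⟩

theorem isGreatest_abs_normalizedInftyLaplacian_roundedCone (hε : ε ∈ Ioo 0 1) :
    IsGreatest ((fun x => |normalizedInftyLaplacian (roundedCone ε) x|) '' Metric.ball (0 : E) 1)
      ε⁻¹ := by
  simp only [abs_normalizedInftyLaplacian_roundedCone hε.1]
  have hr : 1 - 3 * ε / 4 ∈ Ioo (1 - ε) (1 - ε / 2) := by
    constructor <;> linarith [hε.1]
  obtain ⟨x, hxε, hx⟩ := exists_roundedCone_eq (E := E) hε.1 (Ioo_subset_Icc_self hr)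
  refine ⟨⟨x, mem_ball_zero_iff.mpr (hxε.trans_lt hε.2), ?_⟩, ?_⟩
  · dsimp only
    rw [hx, indicator_of_mem hr]
  · rintro _ ⟨y, -, rfl⟩
    exact indicator_le_self' (fun _ _ => (inv_pos.mpr hε.1).le) _

end LevelSets

/-- The level-set ABP quantity for `w_ε` stays bounded (by `1`) as `ε → 0⁺`,
whereas the plain `L^∞` norm of `Δ_∞^N w_ε` on the unit ball equals `1/ε`, which
blows up as `ε → 0⁺`. -/
theorem stmt8 (n : ℕ) (hn : 2 ≤ n) (ε : ℝ) (hε : ε ∈ Set.Ioo (0 : ℝ) 1)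
    (w : EuclideanSpace ℝ (Fin n) → ℝ)
    (hw : ∀ x, w x = if ‖x‖ ≤ ε then 1 - ε / 2 - ‖x‖ ^ 2 / (2 * ε) else 1 - ‖x‖)
    (Δ : EuclideanSpace ℝ (Fin n) → ℝ)
    (hΔ : ∀ x, Δ x = ⟪(fderiv ℝ (gradient w) x) (‖gradient w x‖⁻¹ • gradient w x),
        ‖gradient w x‖⁻¹ • gradient w x⟫) :
    (∫ r in (0 : ℝ)..(1 - ε / 2),
        sSup ((fun x => |Δ x|) ''
          {x | x ∈ Metric.ball (0 : EuclideanSpace ℝ (Fin n)) 1 ∧ w x = r})) ≤ 1 ∧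
    sSup ((fun x => |Δ x|) '' Metric.ball (0 : EuclideanSpace ℝ (Fin n)) 1) = 1 / ε ∧
    Filter.Tendsto (fun e : ℝ => 1 / e) (nhdsWithin 0 (Set.Ioi 0)) Filter.atTop := by
  have : NeZero n := ⟨by omega⟩
  obtain rfl : w = roundedCone ε := funext hw
  obtain rfl : Δ = normalizedInftyLaplacian (roundedCone ε) := funext hΔ
  refine ⟨?_, ?_, by simpa only [one_div] using tendsto_inv_nhdsGT_zero⟩
  · simp only [sSup_abs_normalizedInftyLaplacian_roundedCone_levelSet hε]
    have hhalf : (1 - ε / 2 - (1 - ε)) * ε⁻¹ = 1 / 2 := by field_simp [hε.1.ne']; ring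
    rw [intervalIntegral_indicator_Ioo_const (by linarith [hε.2]) (by linarith [hε.1]), hhalf]
    norm_num
  · rw [(isGreatest_abs_normalizedInftyLaplacian_roundedCone hε).csSup_eq, one_div]
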